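/- arXiv:2112.11792 — 2 statements merged into one kernel-verified Lean document; each statement's English description precedes it below -/
import Mathlib

section
/- Let Tr : F_{q^n} → F_q denote the field trace. Then the set { Tr(x)/x : x ∈ F_{q^n}, x ≠ 0 } has exactly q^{n−1} + 1 elements. -/
/-!
For `Tr(x) ≠ 0` the element `y = x / Tr(x)` has `Tr(y) = 1` and `Tr(x)/x = y⁻¹`; conversely every
`y` with `Tr(y) = 1` gives `Tr(y)/y = y⁻¹`. So the nonzero values of `Tr(x)/x` are exactly the
inverses of the affine hyperplane `Tr = 1`, a coset of `ker Tr` with `q^{n-1}` elements, and the value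
`0` is attained because `ker Tr` is nonzero once `n ≥ 2`.
-/

open Module Set

theorem ncard_preimage_singleton_eq_of_mem_range {G M F : Type*} [AddGroup G] [Finite G]
    [AddMonoid M] [FunLike F G M] [AddMonoidHomClass F G M] (f : F) {y z : M}
    (hy : y ∈ range f) (hz : z ∈ range f) :
    (f ⁻¹' {y}).ncard = (f ⁻¹' {z}).ncard := by
  classical
  have := Fintype.ofFinite G
  have hfiber := AddMonoidHom.card_fiber_eq_of_mem_range f hy hz
  rw [← ncard_coe_finset, ← ncard_coe_finset] at hfiber
  simpa [preimage] using hfiber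

section Trace

variable {K L : Type*} [Field K] [Field L] [Algebra K L]

theorem finrank_ker_trace [FiniteDimensional K L] [Algebra.IsSeparable K L] :
    finrank K (LinearMap.ker (Algebra.trace K L)) = finrank K L - 1 := by
  have h := (Algebra.trace K L).finrank_range_add_finrank_ker
  rw [LinearMap.range_eq_top.mpr (Algebra.trace_surjective K L), finrank_top,
    finrank_self] at h
  omega

theorem setOf_div_self_eq_insert_inv_preimage_one (f : L →ₗ[K] K)
    (hker : ∃ x ≠ 0, f x = 0) :
    {z : L | ∃ x : L, x ≠ 0 ∧ z = algebraMap K L (f x) / x} =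
      insert 0 ((·⁻¹) '' (f ⁻¹' {1})) := by
  ext z
  constructor
  · rintro ⟨x, hx, rfl⟩
    by_cases hfx : f x = 0
    · simp [hfx]
    refine Or.inr ⟨(f x)⁻¹ • x, ?_, ?_⟩
    · simp [hfx]
    · simp [Algebra.smul_def, div_eq_mul_inv, mul_comm]
  · rintro (rfl | ⟨y, hy, rfl⟩)
    · obtain ⟨x, hx, hfx⟩ := hker
      exact ⟨x, hx, by simp [hfx]⟩
    · have hy0 : y ≠ 0 := by rintro rfl; simp at hy
      exact ⟨y, hy0, by simp_all⟩

theorem zero_notMem_inv_image_preimage_one (f : L →ₗ[K] K) :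
    (0 : L) ∉ (·⁻¹) '' (f ⁻¹' {1}) := by
  rintro ⟨y, hy, hy0⟩
  simp_all

end Trace

theorem trace_directions_card_general
    (q n : ℕ) (hn : 2 ≤ n)
    (Fq F : Type*) [Field Fq] [Field F] [Algebra Fq F] [Fintype Fq] [Fintype F]
    (hcardq : Fintype.card Fq = q) (hcardF : Fintype.card F = q ^ n) :
    ({z : F | ∃ x : F, x ≠ 0 ∧
        z = algebraMap Fq F (Algebra.trace Fq F x) / x}).ncard = q ^ (n - 1) + 1 := by
  have hrank : finrank Fq F = n := by
    refine Nat.pow_right_injective (hcardq ▸ Fintype.one_lt_card : 2 ≤ q) ?_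
    simpa [hcardF, hcardq] using (card_eq_pow_finrank (K := Fq) (V := F)).symm
  have hker : finrank Fq (LinearMap.ker (Algebra.trace Fq F)) = n - 1 := by
    rw [finrank_ker_trace, hrank]
  obtain ⟨⟨x, hx⟩, hx0⟩ := finrank_pos_iff_exists_ne_zero.mp
    (by rw [hker]; omega : 0 < finrank Fq (LinearMap.ker (Algebra.trace Fq F)))
  rw [setOf_div_self_eq_insert_inv_preimage_one _ ⟨x, by simpa using hx0, hx⟩,
    ncard_insert_of_notMem (zero_notMem_inv_image_preimage_one _),
    ncard_image_of_injective _ inv_injective,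
    ncard_preimage_singleton_eq_of_mem_range _ (Algebra.trace_surjective Fq F 1) ⟨0, map_zero _⟩,
    ← hcardq, Fintype.card_eq_nat_card, ← hker, ← natCard_eq_pow_finrank,
    ← Nat.card_coe_set_eq]
  rfl

/-- the set `{Tr(x)/x : x ∈ F_{q^n}^*}` has exactly `q^{n-1} + 1` elements. -/
theorem trace_directions_card
    (q n : ℕ) (hq : ∃ p m : ℕ, Nat.Prime p ∧ 0 < m ∧ q = p ^ m) (hn : 2 ≤ n)
    (Fq F : Type*) [Field Fq] [Field F] [Algebra Fq F] [Fintype Fq] [Fintype F]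
    (hcardq : Fintype.card Fq = q) (hcardF : Fintype.card F = q ^ n) :
    ({z : F | ∃ x : F, x ≠ 0 ∧
        z = algebraMap Fq F (Algebra.trace Fq F x) / x}).ncard = q ^ (n - 1) + 1 :=
  trace_directions_card_general q n hn Fq F hcardq hcardF
end

section
/- Let f be an F_q-linear map on F_{q^n} and let B_f = G_f ∪ D_f where G_f = {⟨(x, f(x), 1)⟩ : x ∈ F_{q^n}} and D_f = {⟨(x, f(x), 0)⟩ : x ∈ F_{q^n}^*}. Then every line ℓ of PG(2, q^n) satisfies |ℓ ∩ B_f| ≡ 1 (mod q); in particular B_f is a blocking set (every line meets it). -/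
/-! Let `n = [F : F_q]`. The vectors `(x, f x, c)` with `c ∈ F_q` form an `F_q`-subspace `U`
of `F³` of dimension `n + 1`, and the points of `B_f` are exactly the points `⟨v⟩` with
`v ∈ U \ {0}`. A line `ℓ` is an `F_q`-subspace of dimension `2n` of the `3n`-dimensional space,
so `T = U ∩ ℓ ≠ 0`, and the points of `B_f` on `ℓ` are the points spanned by `T \ {0}`. Sorting
the `q^m - 1` nonzero vectors of `T` by the point they span, each point `P` receives the
`q^k - 1` nonzero vectors of `T ∩ P`; modulo `q` this reads `-1 ≡ -|ℓ ∩ B_f|`. -/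

open Module Submodule
open scoped Finset

namespace Submodule

variable {K V : Type*} [Field K] [AddCommGroup V] [Module K V]

theorem inf_ne_bot_of_finrank_lt_add [FiniteDimensional K V] {s t : Submodule K V}
    (h : finrank K V < finrank K s + finrank K t) : s ⊓ t ≠ ⊥ :=
  fun hst => h.not_ge (finrank_add_finrank_le_of_disjoint (disjoint_iff.mpr hst))

variable [Fintype K] [Finite V]

theorem card_dvd_natCard {W : Submodule K V} (hW : W ≠ ⊥) : Fintype.card K ∣ Nat.card W := by
  have : Fintype W := Fintype.ofFinite W
  rw [Nat.card_eq_fintype_card, card_eq_pow_finrank (K := K) (V := W)]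
  exact dvd_pow_self _ (finrank_eq_zero.not.mpr hW)

theorem natCast_ncard_sdiff_zero_eq_neg_one {W : Submodule K V} (hW : W ≠ ⊥) :
    (((W : Set V) \ {0}).ncard : ZMod (Fintype.card K)) = -1 := by
  have hpos : 1 ≤ Nat.card W := Nat.card_pos
  rw [Set.ncard_sdiff_singleton_of_mem W.zero_mem, ← Nat.card_coe_set_eq, SetLike.coe_sort_coe,
    Nat.cast_sub hpos, (ZMod.natCast_eq_zero_iff _ _).mpr (card_dvd_natCard hW)]
  simp

theorem span_singleton_eq_of_mem {L W : Type*} [DivisionRing L] [AddCommGroup W] [Module L W]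
    {u v : W} (hu : u ≠ 0) (h : u ∈ L ∙ v) : L ∙ u = L ∙ v := by
  obtain ⟨c, rfl⟩ := mem_span_singleton.mp h
  exact span_singleton_smul_eq (IsUnit.mk0 c (left_ne_zero_of_smul hu)) v

variable {L : Type*} [DivisionRing L] [Algebra K L] [Module L V] [IsScalarTower K L V]

theorem ncard_image_span_singleton_modEq_one {T : Submodule K V} (hT : T ≠ ⊥) :
    ((fun v => L ∙ v) '' ((T : Set V) \ {0})).ncard ≡ 1 [MOD Fintype.card K] := by
  classical
  have : Fintype V := Fintype.ofFinite V
  set φ : V → Submodule L V := fun v => L ∙ v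
  set S := ((T : Set V) \ {0}).toFinset
  have hfiber : ∀ v ∈ S, {u ∈ S | φ u = φ v} =
      (((T ⊓ (φ v).restrictScalars K : Submodule K V) : Set V) \ {0}).toFinset := by
    intro v hv
    ext u
    simp only [S, Finset.mem_filter, Set.mem_toFinset, Set.mem_sdiff, SetLike.mem_coe,
      Set.mem_singleton_iff, mem_inf, restrictScalars_mem]
    constructor
    · rintro ⟨⟨huT, hu⟩, huv⟩
      exact ⟨⟨huT, huv ▸ mem_span_singleton_self u⟩, hu⟩
    · rintro ⟨⟨huT, huv⟩, hu⟩
      exact ⟨⟨huT, hu⟩, span_singleton_eq_of_mem hu huv⟩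
  have hfiber_card : ∀ P ∈ S.image φ, (#{u ∈ S | φ u = P} : ZMod (Fintype.card K)) = -1 := by
    intro P hP
    obtain ⟨v, hv, rfl⟩ := Finset.mem_image.mp hP
    rw [hfiber v hv, ← Set.ncard_eq_toFinset_card']
    obtain ⟨hvT, hv0⟩ := Set.mem_toFinset.mp hv
    exact natCast_ncard_sdiff_zero_eq_neg_one
      (Submodule.ne_bot_iff _ |>.mpr ⟨v, ⟨hvT, mem_span_singleton_self v⟩, hv0⟩)
  have hcount :=
    congrArg (Nat.cast : ℕ → ZMod (Fintype.card K)) (Finset.card_eq_sum_card_image φ S)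
  rw [Nat.cast_sum, Finset.sum_congr rfl hfiber_card, ← Set.ncard_eq_toFinset_card',
    natCast_ncard_sdiff_zero_eq_neg_one hT, Finset.sum_const, nsmul_eq_mul, mul_neg_one,
    neg_inj] at hcount
  have himage : φ '' ((T : Set V) \ {0}) = ↑(S.image φ) := by
    rw [Finset.coe_image, Set.coe_toFinset]
  rw [himage, Set.ncard_coe_finset, ← ZMod.natCast_eq_natCast_iff, ← hcount, Nat.cast_one]

end Submodule

section

variable {K F : Type*} [Field K] [Field F] [Algebra K F] (f : F →ₗ[K] F)

def homogenizedGraph : Submodule K (F × F × F) :=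
  LinearMap.range <| (LinearMap.fst K F K).prod <|
    (f ∘ₗ LinearMap.fst K F K).prod (Algebra.linearMap K F ∘ₗ LinearMap.snd K F K)

variable {f}

theorem mem_homogenizedGraph {v : F × F × F} :
    v ∈ homogenizedGraph f ↔ ∃ x c, (x, f x, algebraMap K F c) = v := by
  simp [homogenizedGraph]

variable (f)

theorem finrank_homogenizedGraph [FiniteDimensional K F] :
    finrank K (homogenizedGraph f) = finrank K F + 1 := by
  rw [homogenizedGraph, LinearMap.finrank_range_of_inj]
  · simp [finrank_prod]
  · rintro ⟨x, c⟩ ⟨y, d⟩ h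
    simp_all [Prod.ext_iff]

theorem exists_ne_zero_mem_homogenizedGraph_span_eq_iff (Q : Submodule F (F × F × F)) :
    (∃ v ∈ homogenizedGraph f, v ≠ 0 ∧ F ∙ v = Q) ↔
      (∃ x : F, Q = F ∙ (x, f x, 1)) ∨ (∃ x : F, x ≠ 0 ∧ Q = F ∙ (x, f x, 0)) := by
  constructor
  · rintro ⟨_, hv, hv0, rfl⟩
    obtain ⟨x, c, rfl⟩ := mem_homogenizedGraph.mp hv
    by_cases hc : c = 0
    · subst hc
      refine .inr ⟨x, fun hx => hv0 ?_, by rw [map_zero]⟩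
      simp [hx]
    · refine .inl ⟨c⁻¹ • x, ?_⟩
      have hscale : (x, f x, algebraMap K F c) =
          algebraMap K F c • (c⁻¹ • x, f (c⁻¹ • x), (1 : F)) := by
        rw [LinearMap.map_smul]
        simp [Algebra.smul_def, hc]
      rw [hscale, span_singleton_smul_eq (IsUnit.mk0 _ (by simpa using hc))]
  · rintro (⟨x, rfl⟩ | ⟨x, hx, rfl⟩)
    · exact ⟨_, mem_homogenizedGraph.mpr ⟨x, 1, by rw [map_one]⟩, by simp, rfl⟩
    · exact ⟨_, mem_homogenizedGraph.mpr ⟨x, 0, by rw [map_zero]⟩, by simp [hx], rfl⟩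

theorem homogenizedGraph_inf_restrictScalars_ne_bot [FiniteDimensional K F]
    {ℓ : Submodule F (F × F × F)} (hℓ : 2 ≤ finrank F ℓ) :
    homogenizedGraph f ⊓ ℓ.restrictScalars K ≠ ⊥ := by
  apply inf_ne_bot_of_finrank_lt_add
  have hℓK : finrank K (ℓ.restrictScalars K) = finrank K F * finrank F ℓ :=
    ((restrictScalarsEquiv K F _ ℓ).restrictScalars K).finrank_eq.trans
      (finrank_mul_finrank K F ℓ).symm
  have hdim : finrank K (F × F × F) = 3 * finrank K F := by
    simp only [finrank_prod]; ring
  rw [hdim, finrank_homogenizedGraph, hℓK]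
  nlinarith

end

theorem Bf_blocking_mod_q_general
    (q : ℕ)
    (Fq F : Type*) [Field Fq] [Field F] [Algebra Fq F] [Fintype Fq] [Fintype F]
    (hcardq : Fintype.card Fq = q)
    (f : F →ₗ[Fq] F) :
    ∀ ℓ : Submodule F (F × F × F), Module.finrank F ℓ = 2 →
      (({Q : Submodule F (F × F × F) |
          ((∃ x : F, Q = Submodule.span F {(x, f x, (1 : F))}) ∨
            (∃ x : F, x ≠ 0 ∧ Q = Submodule.span F {(x, f x, (0 : F))})) ∧ Q ≤ ℓ}).ncard
          ≡ 1 [MOD q])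
      ∧ ∃ Q : Submodule F (F × F × F),
          ((∃ x : F, Q = Submodule.span F {(x, f x, (1 : F))}) ∨
            (∃ x : F, x ≠ 0 ∧ Q = Submodule.span F {(x, f x, (0 : F))})) ∧ Q ≤ ℓ := by
  intro ℓ hℓ
  set T := homogenizedGraph f ⊓ ℓ.restrictScalars Fq
  have hT : T ≠ ⊥ := homogenizedGraph_inf_restrictScalars_ne_bot f hℓ.ge
  have hpoints : {Q : Submodule F (F × F × F) |
      ((∃ x : F, Q = F ∙ (x, f x, 1)) ∨ (∃ x : F, x ≠ 0 ∧ Q = F ∙ (x, f x, 0))) ∧ Q ≤ ℓ} =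
      (fun v => F ∙ v) '' ((T : Set (F × F × F)) \ {0}) := by
    ext Q
    rw [Set.mem_ofPred_eq, ← exists_ne_zero_mem_homogenizedGraph_span_eq_iff]
    constructor
    · rintro ⟨⟨v, hv, hv0, rfl⟩, hvℓ⟩
      exact ⟨v, ⟨⟨hv, (span_singleton_le_iff_mem v ℓ).mp hvℓ⟩, hv0⟩, rfl⟩
    · rintro ⟨v, ⟨⟨hv, hvℓ⟩, hv0⟩, rfl⟩
      exact ⟨⟨v, hv, hv0, rfl⟩, (span_singleton_le_iff_mem v ℓ).mpr hvℓ⟩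
  obtain ⟨v, hvT, hv0⟩ := (Submodule.ne_bot_iff T).mp hT
  refine ⟨hpoints ▸ hcardq ▸ ncard_image_span_singleton_modEq_one hT, F ∙ v,
    (exists_ne_zero_mem_homogenizedGraph_span_eq_iff f _).mp ⟨v, hvT.1, hv0, rfl⟩,
    (span_singleton_le_iff_mem v ℓ).mpr hvT.2⟩

/-- every line of `PG(2,q^n)` meets `B_f = G_f ∪ D_f` in a number of
points congruent to `1` modulo `q`; in particular `B_f` is a blocking set. -/
theorem Bf_blocking_mod_q
    (q n : ℕ) (hq : ∃ p m : ℕ, Nat.Prime p ∧ 0 < m ∧ q = p ^ m) (hn : 2 ≤ n)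
    (Fq F : Type*) [Field Fq] [Field F] [Algebra Fq F] [Fintype Fq] [Fintype F]
    (hcardq : Fintype.card Fq = q) (hcardF : Fintype.card F = q ^ n)
    (f : F →ₗ[Fq] F) :
    ∀ ℓ : Submodule F (F × F × F), Module.finrank F ℓ = 2 →
      (({Q : Submodule F (F × F × F) |
          ((∃ x : F, Q = Submodule.span F {(x, f x, (1 : F))}) ∨
            (∃ x : F, x ≠ 0 ∧ Q = Submodule.span F {(x, f x, (0 : F))})) ∧ Q ≤ ℓ}).ncard
          ≡ 1 [MOD q])
      ∧ ∃ Q : Submodule F (F × F × F),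
          ((∃ x : F, Q = Submodule.span F {(x, f x, (1 : F))}) ∨
            (∃ x : F, x ≠ 0 ∧ Q = Submodule.span F {(x, f x, (0 : F))})) ∧ Q ≤ ℓ :=
  Bf_blocking_mod_q_general q Fq F hcardq f
end
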